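/- For every odd prime power q, the number of points P ∈ Cone_∞(F)(𝔽_q) such that t = 0 or z₀² + z₁² = 0 (in homogeneous coordinates of P) equals |F(𝔽_q)| + 4q² + 4q²·χ(−1) − 4q − 6q·χ(−1) + 1 + 2·χ(−1). -/

import Mathlib

open scoped LinearAlgebra.Projectivization

/-- The Fermat quartic condition on `ℙ³`: `z₀⁴ - z₁⁴ + z₂⁴ - z₃⁴ = 0`. -/
def FermatCond {F : Type*} [Field F] (z : Fin 4 → F) : Prop :=
  z 0 ^ 4 - z 1 ^ 4 + z 2 ^ 4 - z 3 ^ 4 = 0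

/-- The tangent cone condition on `ℙ⁴` with coordinates `[t : z₀ : z₁ : z₂ : z₃]`:
`z₀⁴ - z₁⁴ + z₂⁴ - z₃⁴ = 0`. -/
def ConeCond {F : Type*} [Field F] (v : Fin 5 → F) : Prop :=
  v 1 ^ 4 - v 2 ^ 4 + v 3 ^ 4 - v 4 ^ 4 = 0

/-!
Counting nonzero vectors instead of projective points multiplies both sides by `q - 1`.
A boundary vector `(t, z)` with `t = 0` is a nonzero vector on the affine Fermat cone.
One with `t ≠ 0` satisfies `z₀² + z₁² = 0`, which turns the quartic equation into
`z₂⁴ = z₃⁴`, so these contribute `(q - 1) · N₂ · N₄` with `N₂ = #{z₀² + z₁² = 0}` and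
`N₄ = #{z₂⁴ = z₃⁴}`. Both follow from `#{b | b² = a} = 1 + χ(a)`:
`N₂ = q + (q - 1) χ(-1)` and, since `z₂⁴ = z₃⁴` means `z₃² = ± z₂²` with overlap only at
the origin, `N₄ = 3q - 2 + (q - 1) χ(-1)`.
-/

namespace Projectivization

variable {K V : Type*} [Field K] [AddCommGroup V] [Module K V]

noncomputable def nonZeroSubtypeEquivProdUnits (S : V → Prop)
    (hS : ∀ (c : Kˣ) (v : V), S (c • v) ↔ S v) :
    {v : V // v ≠ 0 ∧ S v} ≃ {p : ℙ K V // S p.rep} × Kˣ :=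
  (Equiv.subtypeSubtypeEquivSubtypeInter (· ≠ 0) S).symm.trans <|
    ((nonZeroEquivProjectivizationProdUnits K V).subtypeEquiv fun v => by
      obtain ⟨a, ha⟩ := exists_smul_eq_mk_rep K v.1 v.2
      exact (hS a v).symm.trans (ha ▸ Iff.rfl)).trans
    Equiv.prodSubtypeFstEquivSubtypeProd

end Projectivization

theorem card_fin_four_subtype {α : Type*} (A B : α → α → Prop) :
    Nat.card {z : Fin 4 → α // A (z 0) (z 1) ∧ B (z 2) (z 3)} =
      Nat.card {p : α × α // A p.1 p.2} * Nat.card {p : α × α // B p.1 p.2} := by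
  let e : (Fin 4 → α) ≃ (α × α) × (α × α) :=
    { toFun z := ((z 0, z 1), (z 2, z 3))
      invFun p := ![p.1.1, p.1.2, p.2.1, p.2.2]
      left_inv z := by ext i; fin_cases i <;> rfl
      right_inv p := rfl }
  rw [← Nat.card_prod]
  exact Nat.card_congr <|
    (e.subtypeEquiv (q := fun p => A p.1.1 p.1.2 ∧ B p.2.1 p.2.2) fun _ => Iff.rfl).trans <|
      Equiv.subtypeProdEquivProd (p := fun p : α × α => A p.1 p.2)
        (q := fun p : α × α => B p.1 p.2)

section Field

variable {F : Type*} [Field F]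

abbrev ConeBoundaryCond (v : Fin 5 → F) : Prop :=
  ConeCond v ∧ (v 0 = 0 ∨ v 1 ^ 2 + v 2 ^ 2 = 0)

theorem fermatCond_smul (c : Fˣ) (z : Fin 4 → F) : FermatCond (c • z) ↔ FermatCond z := by
  simp only [FermatCond, Units.smul_def, Pi.smul_apply, smul_eq_mul, mul_pow, ← mul_sub,
    ← mul_add, mul_eq_zero, pow_eq_zero_iff, Units.ne_zero, false_or, ne_eq,
    OfNat.ofNat_ne_zero, not_false_eq_true]

theorem coneCond_smul (c : Fˣ) (v : Fin 5 → F) : ConeCond (c • v) ↔ ConeCond v := by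
  simp only [ConeCond, Units.smul_def, Pi.smul_apply, smul_eq_mul, mul_pow, ← mul_sub,
    ← mul_add, mul_eq_zero, pow_eq_zero_iff, Units.ne_zero, false_or, ne_eq,
    OfNat.ofNat_ne_zero, not_false_eq_true]

theorem coneBoundaryCond_smul (c : Fˣ) (v : Fin 5 → F) :
    ConeBoundaryCond (c • v) ↔ ConeBoundaryCond v := by
  rw [ConeBoundaryCond, ConeBoundaryCond, coneCond_smul]
  simp only [Units.smul_def, Pi.smul_apply, smul_eq_mul, mul_pow, ← mul_add, mul_eq_zero,
    pow_eq_zero_iff, Units.ne_zero, false_or, ne_eq, OfNat.ofNat_ne_zero, not_false_eq_true]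

theorem fermatCond_iff_of_sq_add_sq_eq_zero {z : Fin 4 → F} (h : z 0 ^ 2 + z 1 ^ 2 = 0) :
    FermatCond z ↔ z 2 ^ 4 = z 3 ^ 4 := by
  rw [FermatCond, ← sub_eq_zero (a := z 2 ^ 4)]
  constructor <;> intro h'
  · linear_combination h' - (z 0 ^ 2 - z 1 ^ 2) * h
  · linear_combination h' + (z 0 ^ 2 - z 1 ^ 2) * h

theorem cons_ne_zero_and_coneBoundaryCond_iff (t : F) (z : Fin 4 → F) :
    (Fin.cons t z ≠ (0 : Fin 5 → F) ∧ ConeBoundaryCond (Fin.cons t z : Fin 5 → F)) ↔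
      (t = 0 ∧ z ≠ 0 ∧ FermatCond z) ∨
        (t ≠ 0 ∧ z 0 ^ 2 + z 1 ^ 2 = 0 ∧ z 2 ^ 4 = z 3 ^ 4) := by
  have hzero : (Fin.cons t z : Fin 5 → F) = 0 ↔ t = 0 ∧ z = 0 := Matrix.cons_eq_zero_iff
  have hcond : ConeBoundaryCond (Fin.cons t z : Fin 5 → F) ↔
      FermatCond z ∧ (t = 0 ∨ z 0 ^ 2 + z 1 ^ 2 = 0) := Iff.rfl
  rw [ne_eq, hzero, hcond]
  by_cases ht : t = 0
  · simp [ht]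
  · by_cases hz : z 0 ^ 2 + z 1 ^ 2 = 0
    · simp [ht, hz, fermatCond_iff_of_sq_add_sq_eq_zero hz]
    · simp [ht, hz]

variable [Finite F]

theorem card_cone_boundary_vectors :
    Nat.card {v : Fin 5 → F // v ≠ 0 ∧ ConeBoundaryCond v} =
      Nat.card {z : Fin 4 → F // z ≠ 0 ∧ FermatCond z} +
        Nat.card Fˣ *
          Nat.card {z : Fin 4 → F // z 0 ^ 2 + z 1 ^ 2 = 0 ∧ z 2 ^ 4 = z 3 ^ 4} := by
  classical
  have disj : Disjoint (fun x : F × (Fin 4 → F) => x.1 = 0 ∧ x.2 ≠ 0 ∧ FermatCond x.2)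
      (fun x => x.1 ≠ 0 ∧ x.2 0 ^ 2 + x.2 1 ^ 2 = 0 ∧ x.2 2 ^ 4 = x.2 3 ^ 4) :=
    Pi.disjoint_iff.mpr fun x => Prop.disjoint_iff.mpr fun h => h.2.1 h.1.1
  rw [← Nat.card_congr ((Fin.consEquiv fun _ => F).subtypeEquiv fun x =>
      (cons_ne_zero_and_coneBoundaryCond_iff x.1 x.2).symm),
    Nat.card_congr (subtypeOrEquiv _ _ disj), Nat.card_sum,
    Nat.card_congr (Equiv.subtypeProdEquivProd (p := (· = (0 : F)))
      (q := fun z : Fin 4 → F => z ≠ 0 ∧ FermatCond z)),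
    Nat.card_congr (Equiv.subtypeProdEquivProd (p := (· ≠ (0 : F)))
      (q := fun z : Fin 4 → F => z 0 ^ 2 + z 1 ^ 2 = 0 ∧ z 2 ^ 4 = z 3 ^ 4)),
    Nat.card_prod, Nat.card_prod, Nat.card_unique, one_mul,
    Nat.card_congr (unitsEquivNeZero (G₀ := F))]

theorem card_cone_boundary :
    Nat.card {p : ℙ F (Fin 5 → F) // ConeBoundaryCond p.rep} =
      Nat.card {p : ℙ F (Fin 4 → F) // FermatCond p.rep} +
        Nat.card {p : F × F // p.1 ^ 2 + p.2 ^ 2 = 0} *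
          Nat.card {p : F × F // p.1 ^ 4 = p.2 ^ 4} := by
  refine Nat.eq_of_mul_eq_mul_right (Nat.card_pos (α := Fˣ)) ?_
  rw [← Nat.card_prod, ← Nat.card_congr
      (Projectivization.nonZeroSubtypeEquivProdUnits _ coneBoundaryCond_smul),
    add_mul, ← Nat.card_prod, ← Nat.card_congr
      (Projectivization.nonZeroSubtypeEquivProdUnits _ fermatCond_smul),
    card_cone_boundary_vectors,
    card_fin_four_subtype (fun a b : F => a ^ 2 + b ^ 2 = 0) (fun a b => a ^ 4 = b ^ 4)]
  ring

end Field

section PointCounts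

variable {F : Type*} [Field F] [Fintype F] [DecidableEq F]

open Finset

theorem card_sq_eq_mul_sq (hF : ringChar F ≠ 2) (c : F) :
    (Nat.card {p : F × F // p.2 ^ 2 = c * p.1 ^ 2} : ℤ)
      = Fintype.card F + (Fintype.card F - 1) * quadraticChar F c := by
  have fiber (a : F) : (Nat.card {b : F // b ^ 2 = c * a ^ 2} : ℤ)
      = quadraticChar F c * quadraticChar F (a ^ 2) + 1 := by
    rw [← map_mul, ← quadraticChar_card_sqrts hF, Nat.card_eq_fintype_card,
      Fintype.card_subtype, Set.toFinset_ofPred]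
  have sum_sq : ∑ a : F, quadraticChar F (a ^ 2) = Fintype.card F - 1 := by
    rw [← sum_erase_add _ _ (mem_univ 0),
      sum_congr rfl fun a ha => quadraticChar_sq_one' (ne_of_mem_erase ha)]
    simp [card_erase_of_mem, Nat.cast_sub Fintype.card_pos]
  rw [Nat.card_congr (Equiv.subtypeProdEquivSigmaSubtype fun a b : F => b ^ 2 = c * a ^ 2),
    Nat.card_sigma, Nat.cast_sum, sum_congr rfl fun a _ => fiber a, sum_add_distrib,
    ← mul_sum, sum_sq, sum_const, card_univ, nsmul_eq_mul, mul_one]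
  ring

theorem card_sq_add_sq_eq_zero (hF : ringChar F ≠ 2) :
    (Nat.card {p : F × F // p.1 ^ 2 + p.2 ^ 2 = 0} : ℤ)
      = Fintype.card F + (Fintype.card F - 1) * quadraticChar F (-1) := by
  rw [← card_sq_eq_mul_sq hF (-1), Nat.card_congr (Equiv.subtypeEquivRight fun p => ?_)]
  rw [neg_one_mul, eq_neg_iff_add_eq_zero, add_comm]

theorem card_pow_four_eq_pow_four (hF : ringChar F ≠ 2) :
    (Nat.card {p : F × F // p.1 ^ 4 = p.2 ^ 4} : ℤ)
      = 3 * Fintype.card F - 2 + (Fintype.card F - 1) * quadraticChar F (-1) := by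
  have split (p : F × F) :
      p.1 ^ 4 = p.2 ^ 4 ↔ p.2 ^ 2 = 1 * p.1 ^ 2 ∨ p.2 ^ 2 = -1 * p.1 ^ 2 := by
    rw [← sub_eq_zero (a := p.2 ^ 2), ← sub_eq_zero (a := p.2 ^ 2), ← mul_eq_zero]
    constructor <;> intro h <;> linear_combination -h
  have overlap (p : F × F) : p.2 ^ 2 = 1 * p.1 ^ 2 ∧ p.2 ^ 2 = -1 * p.1 ^ 2 ↔ p = 0 := by
    refine ⟨fun ⟨h1, h2⟩ => ?_, fun h => by simp [h]⟩
    have h1' : p.1 = 0 := by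
      have : (2 : F) * p.1 ^ 2 = 0 := by linear_combination h2 - h1
      simpa [Ring.two_ne_zero hF] using this
    exact Prod.ext h1' (by simpa [h1'] using h1)
  have h := card_union_add_card_inter (univ.filter fun p : F × F => p.2 ^ 2 = 1 * p.1 ^ 2)
    (univ.filter fun p : F × F => p.2 ^ 2 = -1 * p.1 ^ 2)
  rw [← filter_or, ← filter_and, filter_congr fun p _ => overlap p,
    ← filter_congr fun p _ => split p, filter_eq', if_pos (mem_univ _), card_singleton] at h
  have hone := card_sq_eq_mul_sq hF 1
  have hneg := card_sq_eq_mul_sq hF (-1)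
  rw [map_one] at hone
  simp only [Nat.card_eq_fintype_card, Fintype.card_subtype] at hone hneg ⊢
  zify at h
  linear_combination h + hone + hneg

end PointCounts

theorem cone_boundary_count (F : Type) [Field F] [Fintype F] [DecidableEq F]
    (hodd : ringChar F ≠ 2) :
    (Nat.card {p : ℙ F (Fin 5 → F) //
        ConeCond p.rep ∧ (p.rep 0 = 0 ∨ p.rep 1 ^ 2 + p.rep 2 ^ 2 = 0)} : ℤ) =
      (Nat.card {p : ℙ F (Fin 4 → F) // FermatCond p.rep} : ℤ) +
        4 * (Fintype.card F : ℤ) ^ 2 +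
        4 * (Fintype.card F : ℤ) ^ 2 * quadraticChar F (-1) -
        4 * (Fintype.card F : ℤ) - 6 * (Fintype.card F : ℤ) * quadraticChar F (-1) +
        1 + 2 * quadraticChar F (-1) := by
  have hε : quadraticChar F (-1) ^ 2 = 1 := quadraticChar_sq_one (neg_ne_zero.mpr one_ne_zero)
  rw [card_cone_boundary, Nat.cast_add, Nat.cast_mul, card_sq_add_sq_eq_zero hodd,
    card_pow_four_eq_pow_four hodd]
  linear_combination ((Fintype.card F : ℤ) - 1) ^ 2 * hε
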